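/- arXiv:2101.09855 — 2 statements merged into one kernel-verified Lean document; each statement's English description precedes it below -/
import Mathlib

section
/- Let w : [0,∞) → ℝ be any continuous function, and fix μ ∈ ℝ, σ > 0, and c > 0. Suppose Q : [0,∞) → ℝ is differentiable with Q(0) = 0 and Q'(t) = Φ((μ·Q(t) + w(Q(t))) / (σ·√(Q(t) + σ²c))) for all t ≥ 0. Then Q(t) → ∞ as t → ∞. -/
open MeasureTheory ProbabilityTheory Filter Set

noncomputable def Phi (x : ℝ) : ℝ :=
  ∫ s in Set.Iic x, (Real.sqrt (2 * Real.pi))⁻¹ * Real.exp (-s ^ 2 / 2)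

lemma phi_integrable : MeasureTheory.Integrable
    (fun s : ℝ => (Real.sqrt (2 * Real.pi))⁻¹ * Real.exp (-s ^ 2 / 2)) := by
  have h : Integrable (fun s : ℝ => Real.exp (-(1/2 : ℝ) * s ^ 2)) :=
    integrable_exp_neg_mul_sq (by norm_num)
  have := h.const_mul (Real.sqrt (2 * Real.pi))⁻¹
  convert this using 2 with s
  ring_nf

lemma Phi_pos (x : ℝ) : 0 < Phi x := by
  rw [Phi, setIntegral_pos_iff_support_of_nonneg_ae]
  · have : Function.support (fun s : ℝ => (Real.sqrt (2 * Real.pi))⁻¹ * Real.exp (-s ^ 2 / 2))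
        = Set.univ := by
      ext s
      simp only [Function.mem_support, Set.mem_univ, iff_true]
      exact mul_ne_zero (inv_ne_zero (ne_of_gt (Real.sqrt_pos.2 (by positivity))))
        (Real.exp_ne_zero _)
    rw [this, Set.univ_inter]
    simp [Real.volume_Iic]
  · filter_upwards with s
    positivity
  · exact phi_integrable.integrableOn

lemma Phi_mono : Monotone Phi := by
  intro x y hxy
  apply setIntegral_mono_set phi_integrable.integrableOn
  · filter_upwards with s; positivity
  · exact Filter.Eventually.of_forall (Set.Iic_subset_Iic.2 hxy)

/-- For any continuous driving path `w` and smoothing `c > 0`, a solution of the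
one-armed Thompson sampling ODE on `[0,∞)` is unbounded: `Q(t) → ∞` as `t → ∞`. -/
theorem one_arm_Q_unbounded (w : ℝ → ℝ) (hw : Continuous w) (μ σ c : ℝ)
    (hσ : 0 < σ) (hc : 0 < c) (Q : ℝ → ℝ) (hQ0 : Q 0 = 0)
    (hQ : ∀ t : ℝ, 0 ≤ t →
      HasDerivAt Q
        (Phi ((μ * Q t + w (Q t)) / (σ * Real.sqrt (Q t + σ ^ 2 * c)))) t) :
    Tendsto Q atTop atTop := by
  set g : ℝ → ℝ := fun y => (μ * y + w y) / (σ * Real.sqrt (y + σ ^ 2 * c)) with hg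
  have hQcont : ContinuousOn Q (Ici 0) := fun t ht =>
    ((hQ t ht).continuousAt).continuousWithinAt
  have hQdiff : DifferentiableOn ℝ Q (interior (Ici 0)) := by
    rw [interior_Ici]
    exact fun t ht => ((hQ t (le_of_lt ht)).differentiableAt).differentiableWithinAt
  have hderiv : ∀ t : ℝ, 0 ≤ t → deriv Q t = Phi (g (Q t)) := fun t ht => (hQ t ht).deriv
  -- monotonicity on Ici 0
  have hmono : StrictMonoOn Q (Ici 0) := by
    apply strictMonoOn_of_deriv_pos (convex_Ici 0) hQcont
    intro t ht
    rw [interior_Ici] at ht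
    rw [hderiv t ht.le]
    exact Phi_pos _
  -- unboundedness
  have hunb : ∀ M : ℝ, ∃ t, 0 ≤ t ∧ M < Q t := by
    intro M
    by_contra h
    push_neg at h
    have hM0 : 0 ≤ M := by have := h 0 le_rfl; rw [hQ0] at this; exact this
    have hQmem : ∀ t : ℝ, 0 ≤ t → Q t ∈ Icc 0 M := by
      intro t ht
      refine ⟨?_, h t ht⟩
      rcases eq_or_lt_of_le ht with rfl | ht'
      · simp [hQ0]
      · have := hmono (self_mem_Ici) (mem_Ici.2 ht) ht'
        rw [hQ0] at this; exact this.le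
    -- g is continuous on Icc 0 M, so bounded below
    have hgc : ContinuousOn g (Icc 0 M) := by
      apply ContinuousOn.div
      · exact (continuous_const.mul continuous_id).continuousOn.add hw.continuousOn
      · exact (continuous_const.mul ((continuous_id.add continuous_const).sqrt)).continuousOn
      · intro y hy
        have h2 : (0:ℝ) < σ ^ 2 * c := by positivity
        have h1 : 0 < y + σ ^ 2 * c := by linarith [hy.1]
        positivity
    obtain ⟨y₀, hy₀, hmin⟩ := (isCompact_Icc).exists_isMinOn ⟨0, left_mem_Icc.2 hM0⟩ hgc
    set ε := Phi (g y₀) with hε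
    have hεpos : 0 < ε := Phi_pos _
    have hle : ∀ t ∈ interior (Ici (0:ℝ)), ε ≤ deriv Q t := by
      intro t ht
      rw [interior_Ici] at ht
      rw [hderiv t ht.le]
      exact Phi_mono (hmin (hQmem t ht.le))
    have key := (convex_Ici 0).mul_sub_le_image_sub_of_le_deriv hQcont hQdiff hle
      0 self_mem_Ici ((M + 1) / ε) (mem_Ici.2 (by positivity))
    have h2 := key (by positivity)
    rw [hQ0, sub_zero, sub_zero, mul_div_cancel₀ _ (ne_of_gt hεpos)] at h2
    have := h ((M + 1) / ε) (by positivity)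
    linarith
  rw [tendsto_atTop]
  intro b
  obtain ⟨t₀, ht₀, hbt₀⟩ := hunb b
  filter_upwards [eventually_ge_atTop t₀] with t ht
  rcases eq_or_lt_of_le ht with rfl | ht'
  · exact hbt₀.le
  · exact hbt₀.le.trans (hmono (mem_Ici.2 ht₀) (mem_Ici.2 (ht₀.trans ht)) ht').le
end

section
/- Let (W₁, W₂) be a pair of independent standard Brownian motions, and fix μ₁, μ₂ ∈ ℝ and c ≥ 0. For d ≥ 0 and continuous paths (w₁, w₂), call Q = (Q₁, Q₂) a d-regularized solution if Q₁, Q₂ : [0,1] → ℝ are continuous with Q₁(0) = Q₂(0) = 0, Q₁(t) + Q₂(t) = t for all t, and Q₁ is differentiable on [0,1] with Q₁'(t) = Φ( (Q₂(t)·S₁(t) − Q₁(t)·S₂(t)) / √( t·Q₁(t)·Q₂(t) + t²·c + d ) ), where S_k(t) = μ_k·Q_k(t) + w_k(Q_k(t)) for k = 1,2. Then almost surely the following holds: if (d_j)_{j∈ℕ} is a sequence with d_j > 0 and d_j → 0, if for each j the pair Q^j is a d_j-regularized solution driven by (W₁(ω), W₂(ω)), and if along a subsequence (j_k) the functions Q^{j_k}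 converge uniformly on [0,1] to a limit Q = (Q₁, Q₂), then for every t ∈ (0,1] at which 0 < Q₁(t) < t, Q₁ is differentiable at t and satisfies Q₁'(t) = Φ( (Q₂(t)·S₁(t) − Q₁(t)·S₂(t)) / √( t·Q₁(t)·Q₂(t) + t²·c ) ) with S_k(t) = μ_k·Q_k(t) + W_k(ω)(Q_k(t)). -/
/-!
Each `Q₁ʲ` is the primitive of its drift, a value of `Φ` and hence bounded by `1`, so
`0 ≤ Q₁ʲ(s) ≤ s` and the radicands stay positive. At a point `t` with `0 < Q₁(t) < t` the
limiting radicand `t Q₁ Q₂ + t² c` is positive on a window `[a, b]` around `t`; there the drifts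
converge pointwise to the continuous limiting drift, dominated convergence passes
`Q₁ʲ(u) - Q₁ʲ(a) = ∫ₐᵘ driftʲ` to the limit, and the fundamental theorem of calculus gives the
derivative. The argument is pathwise: it works for every pair of continuous driving paths.
-/

open MeasureTheory ProbabilityTheory Filter Set

/-- `W` is a standard Brownian motion under `P`: continuous sample paths, `W₀ = 0`,
Gaussian increments `W_t - W_s ~ N(0, t - s)`, and independent increments. -/
def IsStdBM {Ω : Type*} [MeasurableSpace Ω] (P : Measure Ω) (W : ℝ → Ω → ℝ) : Prop :=
  (∀ ω, Continuous fun t => W t ω) ∧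
  (∀ ω, W 0 ω = 0) ∧
  (∀ s t : ℝ, 0 ≤ s → s < t →
    Measure.map (fun ω => W t ω - W s ω) P = gaussianReal 0 (Real.toNNReal (t - s))) ∧
  (∀ (n : ℕ) (t : Fin (n + 1) → ℝ), (∀ i, 0 ≤ t i) → StrictMono t →
    iIndepFun
      (fun i : Fin n => fun ω => W (t i.succ) ω - W (t i.castSucc) ω) P)

/-- `W₁, W₂` are independent standard Brownian motions under `P`. -/
def IndepBMs {Ω : Type*} [MeasurableSpace Ω] (P : Measure Ω) (W₁ W₂ : ℝ → Ω → ℝ) : Prop :=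
  IsStdBM P W₁ ∧ IsStdBM P W₂ ∧
  IndepFun (fun ω => fun t => W₁ t ω) (fun ω => fun t => W₂ t ω) P

/-- A `d`-regularized solution of the two-armed Thompson sampling limit ODE driven by
`(w₁, w₂)`, with means `(μ₁, μ₂)` and smoothing parameters `c, d`. -/
def IsRegSol (w₁ w₂ : ℝ → ℝ) (μ₁ μ₂ c d : ℝ) (Q₁ Q₂ : ℝ → ℝ) : Prop :=
  ContinuousOn Q₁ (Set.Icc 0 1) ∧ ContinuousOn Q₂ (Set.Icc 0 1) ∧
  Q₁ 0 = 0 ∧ Q₂ 0 = 0 ∧ (∀ t ∈ Set.Icc (0 : ℝ) 1, Q₁ t + Q₂ t = t) ∧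
  (∀ t ∈ Set.Icc (0 : ℝ) 1,
    HasDerivWithinAt Q₁
      (Phi ((Q₂ t * (μ₁ * Q₁ t + w₁ (Q₁ t)) - Q₁ t * (μ₂ * Q₂ t + w₂ (Q₂ t))) /
        Real.sqrt (t * Q₁ t * Q₂ t + t ^ 2 * c + d))) (Set.Icc 0 1) t)

open Topology Interval

lemma Phi_eq_setIntegral_gaussianPDFReal (x : ℝ) :
    Phi x = ∫ s in Iic x, gaussianPDFReal 0 1 s := by
  simp [Phi, gaussianPDFReal]

lemma Phi_nonneg (x : ℝ) : 0 ≤ Phi x := by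
  rw [Phi_eq_setIntegral_gaussianPDFReal]
  exact setIntegral_nonneg measurableSet_Iic fun s _ => gaussianPDFReal_nonneg 0 1 s

lemma Phi_le_one (x : ℝ) : Phi x ≤ 1 := by
  rw [Phi_eq_setIntegral_gaussianPDFReal, ← integral_gaussianPDFReal_eq_one 0 one_ne_zero]
  exact setIntegral_le_integral (integrable_gaussianPDFReal 0 1)
    (ae_of_all _ (gaussianPDFReal_nonneg 0 1))

lemma continuous_Phi : Continuous Phi := by
  refine continuous_iff_continuousAt.2 fun x => ?_
  have h := ((integrable_gaussianPDFReal 0 1).integrableOn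
    (s := Iic (x + 1))).continuousOn_Iic_primitive_Iic
  rw [show Phi = fun y => ∫ s in Iic y, gaussianPDFReal 0 1 s from
    funext Phi_eq_setIntegral_gaussianPDFReal]
  exact h.continuousAt (Iic_mem_nhds (lt_add_one x))

lemma sub_mem_Icc_of_hasDerivWithinAt_mem_Icc {D : Set ℝ} (hD : Convex ℝ D) {f f' : ℝ → ℝ}
    (hf : ∀ x ∈ D, HasDerivWithinAt f (f' x) D x) (hf' : ∀ x ∈ D, f' x ∈ Icc 0 1)
    {x y : ℝ} (hx : x ∈ D) (hy : y ∈ D) (hxy : x ≤ y) : f y - f x ∈ Icc 0 (y - x) := by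
  have hcont : ContinuousOn f D := fun z hz => (hf z hz).continuousWithinAt
  have hint : ∀ z ∈ interior D, HasDerivWithinAt f (f' z) (interior D) z :=
    fun z hz => (hf z (interior_subset hz)).mono interior_subset
  have hf_mono : MonotoneOn f D := monotoneOn_of_hasDerivWithinAt_nonneg hD hcont hint
    fun z hz => (hf' z (interior_subset hz)).1
  have hid_sub_mono : MonotoneOn (fun z => z - f z) D :=
    monotoneOn_of_hasDerivWithinAt_nonneg hD (continuousOn_id.sub hcont)
      (fun z hz => (hasDerivWithinAt_id z _).sub (hint z hz))
      fun z hz => sub_nonneg.2 (hf' z (interior_subset hz)).2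
  exact ⟨sub_nonneg.2 (hf_mono hx hy hxy), by linarith [hid_sub_mono hx hy hxy]⟩

lemma integral_eq_sub_of_hasDerivWithinAt_Icc {f f' : ℝ → ℝ} {a b : ℝ} (hab : a ≤ b)
    (hf : ∀ x ∈ Icc a b, HasDerivWithinAt f (f' x) (Icc a b) x)
    (hf' : IntervalIntegrable f' volume a b) : ∫ x in a..b, f' x = f b - f a :=
  intervalIntegral.integral_eq_sub_of_hasDerivAt_of_le hab
    (fun x hx => (hf x hx).continuousWithinAt)
    (fun x hx => (hf x (Ioo_subset_Icc_self hx)).hasDerivAt (Icc_mem_nhds hx.1 hx.2)) hf'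

theorem hasDerivWithinAt_Icc_of_tendsto_of_bounded_deriv {ι : Type*} {l : Filter ι}
    [l.IsCountablyGenerated] [l.NeBot] {f f' : ι → ℝ → ℝ} {F G : ℝ → ℝ} {a b C : ℝ}
    (hf : ∀ n, ∀ x ∈ Icc a b, HasDerivWithinAt (f n) (f' n x) (Icc a b) x)
    (hf'_cont : ∀ n, ContinuousOn (f' n) (Icc a b))
    (hf'_bound : ∀ n, ∀ x ∈ Icc a b, |f' n x| ≤ C)
    (hF : ∀ x ∈ Icc a b, Tendsto (fun n => f n x) l (𝓝 (F x)))
    (hG : ∀ x ∈ Icc a b, Tendsto (fun n => f' n x) l (𝓝 (G x)))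
    (hG_cont : ContinuousOn G (Icc a b)) {x : ℝ} (hx : x ∈ Icc a b) :
    HasDerivWithinAt F (G x) (Icc a b) x := by
  have hprimitive : ∀ u ∈ Icc a b, F u = F a + ∫ y in a..u, G y := by
    intro u hu
    have hsub : Icc a u ⊆ Icc a b := Icc_subset_Icc_right hu.2
    have hIoc : Ι a u ⊆ Icc a b := by
      rw [uIoc_of_le hu.1]
      exact Ioc_subset_Icc_self.trans hsub
    have hFTC : ∀ n, ∫ y in a..u, f' n y = f n u - f n a := fun n =>
      integral_eq_sub_of_hasDerivWithinAt_Icc hu.1 (fun y hy => (hf n y (hsub hy)).mono hsub)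
        ((hf'_cont n).mono (uIcc_of_le hu.1 ▸ hsub)).intervalIntegrable
    have hlim : Tendsto (fun n => ∫ y in a..u, f' n y) l (𝓝 (∫ y in a..u, G y)) :=
      intervalIntegral.tendsto_integral_filter_of_dominated_convergence (fun _ => C)
        (Eventually.of_forall fun n =>
          ((hf'_cont n).mono hIoc).aestronglyMeasurable measurableSet_uIoc)
        (Eventually.of_forall fun n => ae_of_all _ fun y hy => hf'_bound n y (hIoc hy))
        intervalIntegrable_const (ae_of_all _ fun y hy => hG y (hIoc hy))
    have := tendsto_nhds_unique (hlim.congr hFTC) ((hF u hu).sub (hF a ⟨le_rfl, hu.1.trans hu.2⟩))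
    linarith
  have := Fact.mk hx
  have hFTC : HasDerivWithinAt (fun u => ∫ y in a..u, G y) (G x) (Icc a b) x :=
    intervalIntegral.integral_hasDerivWithinAt_right
      (hG_cont.mono (uIcc_of_le hx.1 ▸ Icc_subset_Icc_right hx.2)).intervalIntegrable
      (hG_cont.stronglyMeasurableAtFilter_nhdsWithin measurableSet_Icc x) (hG_cont x hx)
  exact (hFTC.const_add (F a)).congr hprimitive (hprimitive x hx)

lemma exists_Icc_mem_nhdsWithin_Icc_subset {x y t : ℝ} {S : Set ℝ} (hS : S ∈ 𝓝[Icc x y] t) :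
    ∃ a b, Icc a b ∈ 𝓝[Icc x y] t ∧ Icc a b ⊆ S ∩ Icc x y := by
  obtain ⟨ε, hε, hsub⟩ := (nhdsWithin_hasBasis Metric.nhds_basis_closedBall _).mem_iff.1 hS
  refine ⟨max (t - ε) x, min (t + ε) y, ?_, ?_⟩ <;> rw [← Icc_inter_Icc, ← Real.closedBall_eq_Icc]
  · exact inter_comm _ (Icc x y) ▸ inter_mem_nhdsWithin _ (Metric.closedBall_mem_nhds t hε)
  · exact fun z hz => ⟨hsub hz, hz.2⟩

noncomputable def thompsonDrift (w₁ w₂ : ℝ → ℝ) (μ₁ μ₂ q₁ q₂ v : ℝ) : ℝ :=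
  Phi ((q₂ * (μ₁ * q₁ + w₁ q₁) - q₁ * (μ₂ * q₂ + w₂ q₂)) / Real.sqrt v)

lemma thompsonDrift_mem_Icc (w₁ w₂ : ℝ → ℝ) (μ₁ μ₂ q₁ q₂ v : ℝ) :
    thompsonDrift w₁ w₂ μ₁ μ₂ q₁ q₂ v ∈ Icc 0 1 :=
  ⟨Phi_nonneg _, Phi_le_one _⟩

lemma abs_thompsonDrift_le_one (w₁ w₂ : ℝ → ℝ) (μ₁ μ₂ q₁ q₂ v : ℝ) :
    |thompsonDrift w₁ w₂ μ₁ μ₂ q₁ q₂ v| ≤ 1 :=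
  abs_le.2 ⟨by linarith [(thompsonDrift_mem_Icc w₁ w₂ μ₁ μ₂ q₁ q₂ v).1],
    (thompsonDrift_mem_Icc w₁ w₂ μ₁ μ₂ q₁ q₂ v).2⟩

lemma tendsto_thompsonDrift {w₁ w₂ : ℝ → ℝ} (hw₁ : Continuous w₁) (hw₂ : Continuous w₂)
    (μ₁ μ₂ : ℝ) {α : Type*} {l : Filter α} {q₁ q₂ v : α → ℝ} {x₁ x₂ y : ℝ}
    (hq₁ : Tendsto q₁ l (𝓝 x₁)) (hq₂ : Tendsto q₂ l (𝓝 x₂)) (hv : Tendsto v l (𝓝 y))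
    (hy : 0 < y) :
    Tendsto (fun i => thompsonDrift w₁ w₂ μ₁ μ₂ (q₁ i) (q₂ i) (v i)) l
      (𝓝 (thompsonDrift w₁ w₂ μ₁ μ₂ x₁ x₂ y)) := by
  have hnum := (hq₂.mul ((hq₁.const_mul μ₁).add ((hw₁.tendsto x₁).comp hq₁))).sub
    (hq₁.mul ((hq₂.const_mul μ₂).add ((hw₂.tendsto x₂).comp hq₂)))
  have hden := (Real.continuous_sqrt.tendsto y).comp hv
  exact (continuous_Phi.tendsto _).comp (hnum.div hden (Real.sqrt_pos.2 hy).ne')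

namespace IsRegSol

variable {w₁ w₂ : ℝ → ℝ} {μ₁ μ₂ c d : ℝ} {Q₁ Q₂ : ℝ → ℝ}

lemma hasDerivWithinAt (h : IsRegSol w₁ w₂ μ₁ μ₂ c d Q₁ Q₂) {t : ℝ} (ht : t ∈ Icc 0 1) :
    HasDerivWithinAt Q₁ (thompsonDrift w₁ w₂ μ₁ μ₂ (Q₁ t) (Q₂ t) (t * Q₁ t * Q₂ t + t ^ 2 * c + d))
      (Icc 0 1) t :=
  h.2.2.2.2.2 t ht

lemma mem_Icc (h : IsRegSol w₁ w₂ μ₁ μ₂ c d Q₁ Q₂) {t : ℝ} (ht : t ∈ Icc 0 1) :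
    Q₁ t ∈ Icc 0 t := by
  have h0 : (0 : ℝ) ∈ Icc 0 1 := left_mem_Icc.2 zero_le_one
  simpa [h.2.2.1] using sub_mem_Icc_of_hasDerivWithinAt_mem_Icc (convex_Icc 0 1)
    (fun s hs => h.hasDerivWithinAt hs) (fun _ _ => thompsonDrift_mem_Icc ..) h0 ht ht.1

lemma radicand_pos (h : IsRegSol w₁ w₂ μ₁ μ₂ c d Q₁ Q₂) (hc : 0 ≤ c) (hd : 0 < d) {t : ℝ}
    (ht : t ∈ Icc 0 1) : 0 < t * Q₁ t * Q₂ t + t ^ 2 * c + d := by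
  have hQ₁ := h.mem_Icc ht
  have hQ₂ : Q₂ t = t - Q₁ t := eq_sub_of_add_eq' (h.2.2.2.2.1 t ht)
  have : 0 ≤ t * Q₁ t * Q₂ t := by
    rw [hQ₂]
    exact mul_nonneg (mul_nonneg ht.1 hQ₁.1) (sub_nonneg.2 hQ₁.2)
  positivity

lemma continuousOn_thompsonDrift (h : IsRegSol w₁ w₂ μ₁ μ₂ c d Q₁ Q₂) (hw₁ : Continuous w₁)
    (hw₂ : Continuous w₂) (hc : 0 ≤ c) (hd : 0 < d) :
    ContinuousOn (fun t => thompsonDrift w₁ w₂ μ₁ μ₂ (Q₁ t) (Q₂ t)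
      (t * Q₁ t * Q₂ t + t ^ 2 * c + d)) (Icc 0 1) := fun t ht =>
  tendsto_thompsonDrift hw₁ hw₂ μ₁ μ₂ (h.1 t ht) (h.2.1 t ht)
    ((((continuousWithinAt_id.mul (h.1 t ht)).mul (h.2.1 t ht)).add
      ((continuousWithinAt_id.pow 2).mul continuousWithinAt_const)).add continuousWithinAt_const)
    (h.radicand_pos hc hd ht)

end IsRegSol

theorem IsRegSol.hasDerivWithinAt_of_tendstoUniformlyOn {w₁ w₂ : ℝ → ℝ} (hw₁ : Continuous w₁)
    (hw₂ : Continuous w₂) {μ₁ μ₂ c : ℝ} (hc : 0 ≤ c) {d : ℕ → ℝ} (hd : ∀ n, 0 < d n)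
    (hd_lim : Tendsto d atTop (𝓝 0)) {Q₁ Q₂ : ℕ → ℝ → ℝ}
    (hQ : ∀ n, IsRegSol w₁ w₂ μ₁ μ₂ c (d n) (Q₁ n) (Q₂ n)) {L₁ L₂ : ℝ → ℝ}
    (hL₁ : TendstoUniformlyOn Q₁ L₁ atTop (Icc 0 1))
    (hL₂ : TendstoUniformlyOn Q₂ L₂ atTop (Icc 0 1)) {t : ℝ} (ht : t ∈ Ioc 0 1)
    (hL₁_pos : 0 < L₁ t) (hL₁_lt : L₁ t < t) :
    HasDerivWithinAt L₁ (thompsonDrift w₁ w₂ μ₁ μ₂ (L₁ t) (L₂ t) (t * L₁ t * L₂ t + t ^ 2 * c))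
      (Icc 0 1) t := by
  have ht' : t ∈ Icc 0 1 := Ioc_subset_Icc_self ht
  have hL₁_cont := hL₁.continuousOn (Frequently.of_forall fun n => (hQ n).1)
  have hL₂_cont := hL₂.continuousOn (Frequently.of_forall fun n => (hQ n).2.1)
  have hL_sum : L₁ t + L₂ t = t := tendsto_nhds_unique ((hL₁.tendsto_at ht').add
    (hL₂.tendsto_at ht')) (tendsto_const_nhds.congr fun n => ((hQ n).2.2.2.2.1 t ht').symm)
  set v : ℝ → ℝ := fun s => s * L₁ s * L₂ s + s ^ 2 * c
  have hv_cont : ContinuousOn v (Icc 0 1) :=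
    ((continuousOn_id.mul hL₁_cont).mul hL₂_cont).add
      ((continuousOn_id.pow 2).mul continuousOn_const)
  have hv_pos : 0 < v t := by
    have : 0 < t * L₁ t * L₂ t := mul_pos (mul_pos ht.1 hL₁_pos) (by linarith)
    positivity
  obtain ⟨a, b, hab, hab_sub⟩ :=
    exists_Icc_mem_nhdsWithin_Icc_subset ((hv_cont t ht').eventually (lt_mem_nhds hv_pos))
  have hab01 : Icc a b ⊆ Icc 0 1 := fun s hs => (hab_sub hs).2
  refine HasDerivWithinAt.mono_of_mem_nhdsWithin ?_ hab
  refine hasDerivWithinAt_Icc_of_tendsto_of_bounded_deriv (l := atTop) (C := 1)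
    (G := fun s => thompsonDrift w₁ w₂ μ₁ μ₂ (L₁ s) (L₂ s) (v s))
    (fun n s hs => ((hQ n).hasDerivWithinAt (hab01 hs)).mono hab01)
    (fun n => ((hQ n).continuousOn_thompsonDrift hw₁ hw₂ hc (hd n)).mono hab01)
    (fun n s _ => abs_thompsonDrift_le_one ..)
    (fun s hs => hL₁.tendsto_at (hab01 hs)) (fun s hs => ?_) (fun s hs => ?_)
    (mem_of_mem_nhdsWithin ht' hab)
  · have hs01 := hab01 hs
    refine tendsto_thompsonDrift hw₁ hw₂ μ₁ μ₂ (hL₁.tendsto_at hs01) (hL₂.tendsto_at hs01) ?_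
      (hab_sub hs).1
    simpa only [add_zero] using ((((hL₁.tendsto_at hs01).const_mul s).mul
      (hL₂.tendsto_at hs01)).add_const (s ^ 2 * c)).add hd_lim
  · exact tendsto_thompsonDrift hw₁ hw₂ μ₁ μ₂ (hL₁_cont.mono hab01 s hs) (hL₂_cont.mono hab01 s hs)
      (hv_cont.mono hab01 s hs) (hab_sub hs).1

/-- Almost surely, any uniform limit along a subsequence of `d_j`-regularized solutions
(`d_j → 0`) satisfies the two-armed Thompson sampling limit ODE at every `t ∈ (0,1]`
with `0 < Q₁(t) < t`. -/
theorem two_arm_limit_d_to_zero {Ω : Type*} [MeasurableSpace Ω] (P : Measure Ω)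
    (W₁ W₂ : ℝ → Ω → ℝ) (hW : IndepBMs P W₁ W₂) (μ₁ μ₂ c : ℝ) (hc : 0 ≤ c) :
    ∀ᵐ ω ∂P, ∀ dseq : ℕ → ℝ,
      (∀ j, 0 < dseq j) → Tendsto dseq atTop (nhds 0) →
      ∀ Q₁ Q₂ : ℕ → ℝ → ℝ,
        (∀ j, IsRegSol (fun x => W₁ x ω) (fun x => W₂ x ω) μ₁ μ₂ c (dseq j)
          (Q₁ j) (Q₂ j)) →
        ∀ jk : ℕ → ℕ, StrictMono jk →
        ∀ L₁ L₂ : ℝ → ℝ,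
          TendstoUniformlyOn (fun k => Q₁ (jk k)) L₁ atTop (Set.Icc 0 1) →
          TendstoUniformlyOn (fun k => Q₂ (jk k)) L₂ atTop (Set.Icc 0 1) →
          ∀ t ∈ Set.Ioc (0 : ℝ) 1, 0 < L₁ t → L₁ t < t →
            HasDerivWithinAt L₁
              (Phi ((L₂ t * (μ₁ * L₁ t + W₁ (L₁ t) ω) -
                  L₁ t * (μ₂ * L₂ t + W₂ (L₂ t) ω)) /
                Real.sqrt (t * L₁ t * L₂ t + t ^ 2 * c))) (Set.Icc 0 1) t := by
  obtain ⟨⟨hW₁, -⟩, ⟨hW₂, -⟩, -⟩ := hW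
  refine Eventually.of_forall fun ω d hd hd_lim Q₁ Q₂ hQ jk hjk L₁ L₂ hL₁ hL₂ t ht => ?_
  exact IsRegSol.hasDerivWithinAt_of_tendstoUniformlyOn (hW₁ ω) (hW₂ ω) hc (fun k => hd (jk k))
    (hd_lim.comp hjk.tendsto_atTop) (fun k => hQ (jk k)) hL₁ hL₂ ht
end
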